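/- arXiv:2007.02786 — 2 statements merged into one kernel-verified Lean document; each statement's English description precedes it below -/
import Mathlib

section
/- Let P be an n×n row-stochastic real matrix (with n ≥ 1), let γ ∈ [0,1), and set H = I - γP and H̄ = diag(H). Then ρ(I - H̄⁻¹H) ≤ ρ(I - H) < 1. -/
/-!
Every complex eigenvalue of a matrix is bounded in modulus by some absolute row sum
(Gershgorin). For `I - H = γP` all these row sums equal `γ`, which is itself an eigenvalue with
eigenvector `1`, so `ρ(I - H) = γ < 1`. The Jacobi matrix `I - H̄⁻¹H` has zero diagonal and `i`-th
absolute row sum `γ(1 - Pᵢᵢ)/(1 - γPᵢᵢ) ≤ γ`.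
-/

open Matrix

/-- Spectral radius of a real square matrix: the maximum of `|μ|` over all complex
eigenvalues `μ` of the matrix (elements of the spectrum of its complexification). -/
noncomputable def specRad {n : ℕ} (A : Matrix (Fin n) (Fin n) ℝ) : ℝ :=
  sSup {x : ℝ | ∃ μ ∈ spectrum ℂ (A.map (Complex.ofReal ·)), x = ‖μ‖}

open Finset

namespace Matrix

variable {ι K : Type*} [Fintype ι] [DecidableEq ι]

theorem exists_norm_le_sum_norm_of_mem_spectrum [NormedField K] {A : Matrix ι ι K} {μ : K}
    (hμ : μ ∈ spectrum K A) : ∃ k, ‖μ‖ ≤ ∑ j, ‖A k j‖ := by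
  rw [← spectrum_toLin', ← Module.End.hasEigenvalue_iff_mem_spectrum] at hμ
  obtain ⟨k, hk⟩ := eigenvalue_mem_ball hμ
  exact ⟨k, (norm_le_of_mem_closedBall hk).trans_eq (add_sum_erase _ (‖A k ·‖) (mem_univ k))⟩

theorem mem_spectrum_of_forall_sum_eq [Field K] [Nonempty ι] {A : Matrix ι ι K} {c : K}
    (h : ∀ i, ∑ j, A i j = c) : c ∈ spectrum K A := by
  rw [← spectrum_toLin']
  refine Module.End.HasEigenvalue.mem_spectrum
    (Module.End.hasEigenvalue_of_hasEigenvector (x := fun _ => 1) ⟨?_, ?_⟩)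
  · rw [Module.End.mem_eigenspace_iff]
    ext i
    simp [mulVec, dotProduct, h]
  · exact Function.ne_iff.mpr ⟨Classical.arbitrary ι, one_ne_zero⟩

noncomputable def jacobiIterationMatrix [Field K] (H : Matrix ι ι K) : Matrix ι ι K :=
  1 - (diagonal fun i => H i i)⁻¹ * H

theorem jacobiIterationMatrix_apply [Field K] {H : Matrix ι ι K} (hH : ∀ i, H i i ≠ 0)
    (i j : ι) : jacobiIterationMatrix H i j = if i = j then 0 else -(H i j / H i i) := by
  have hinv : (diagonal fun i => H i i)⁻¹ = diagonal fun i => (H i i)⁻¹ :=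
    inv_eq_left_inv (by rw [diagonal_mul_diagonal, ← diagonal_one]; simp [hH])
  rw [jacobiIterationMatrix, sub_apply, hinv, diagonal_mul, one_apply]
  split_ifs with hij
  · subst hij; simp [hH]
  · rw [zero_sub, inv_mul_eq_div]

theorem sum_abs_jacobiIterationMatrix_apply {H : Matrix ι ι ℝ} (hH : ∀ i, H i i ≠ 0) (i : ι) :
    ∑ j, |jacobiIterationMatrix H i j| = (∑ j ∈ univ.erase i, |H i j|) / |H i i| := by
  rw [← add_sum_erase _ _ (mem_univ i), jacobiIterationMatrix_apply hH, if_pos rfl, abs_zero,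
    zero_add, sum_div]
  refine sum_congr rfl fun j hj => ?_
  rw [jacobiIterationMatrix_apply hH, if_neg (ne_of_mem_erase hj).symm, abs_neg, abs_div]

theorem sum_abs_jacobiIterationMatrix_one_sub_smul_le {P : Matrix ι ι ℝ}
    (hP : P ∈ rowStochastic ℝ ι) {γ : ℝ} (hγ0 : 0 ≤ γ) (hγ1 : γ < 1) (i : ι) :
    ∑ j, |jacobiIterationMatrix (1 - γ • P) i j| ≤ γ := by
  have hpos : ∀ k, 0 < (1 - γ • P) k k := fun k => by
    simpa using (mul_le_of_le_one_right hγ0 (le_one_of_mem_rowStochastic hP)).trans_lt hγ1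
  have hoff : ∑ j ∈ univ.erase i, |(1 - γ • P) i j| = γ * (1 - P i i) := by
    rw [← sum_row_of_mem_rowStochastic hP i, ← sum_erase_eq_sub (mem_univ i), mul_sum]
    refine sum_congr rfl fun j hj => ?_
    rw [sub_apply, one_apply_ne (ne_of_mem_erase hj).symm, zero_sub, abs_neg, smul_apply,
      smul_eq_mul, abs_of_nonneg (mul_nonneg hγ0 (nonneg_of_mem_rowStochastic hP))]
  rw [sum_abs_jacobiIterationMatrix_apply (fun k => (hpos k).ne'), hoff, abs_of_pos (hpos i),
    div_le_iff₀ (hpos i)]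
  have hPii : 0 ≤ P i i := nonneg_of_mem_rowStochastic hP
  simp only [sub_apply, one_apply_eq, smul_apply, smul_eq_mul]
  nlinarith [mul_nonneg (mul_nonneg hγ0 hPii) (sub_nonneg.2 hγ1.le)]

end Matrix

section specRad

variable {n : ℕ}

theorem exists_norm_le_sum_abs_of_mem_spectrum {A : Matrix (Fin n) (Fin n) ℝ} {μ : ℂ}
    (hμ : μ ∈ spectrum ℂ (A.map (Complex.ofReal ·))) : ∃ k, ‖μ‖ ≤ ∑ j, |A k j| := by
  simpa only [map_apply, Complex.norm_real, Real.norm_eq_abs] using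
    exists_norm_le_sum_norm_of_mem_spectrum hμ

theorem specRad_le_of_forall_sum_abs_le {A : Matrix (Fin n) (Fin n) ℝ} {r : ℝ} (hr : 0 ≤ r)
    (h : ∀ i, ∑ j, |A i j| ≤ r) : specRad A ≤ r := by
  refine Real.sSup_le ?_ hr
  rintro _ ⟨μ, hμ, rfl⟩
  obtain ⟨k, hk⟩ := exists_norm_le_sum_abs_of_mem_spectrum hμ
  exact hk.trans (h k)

theorem norm_le_specRad {A : Matrix (Fin n) (Fin n) ℝ} {μ : ℂ}
    (hμ : μ ∈ spectrum ℂ (A.map (Complex.ofReal ·))) : ‖μ‖ ≤ specRad A := by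
  refine le_csSup ⟨∑ i, ∑ j, |A i j|, ?_⟩ ⟨μ, hμ, rfl⟩
  rintro _ ⟨ν, hν, rfl⟩
  obtain ⟨k, hk⟩ := exists_norm_le_sum_abs_of_mem_spectrum hν
  exact hk.trans (single_le_sum (fun i _ => sum_nonneg fun j _ => abs_nonneg (A i j)) (mem_univ k))

theorem specRad_smul_of_mem_rowStochastic [Nonempty (Fin n)] {P : Matrix (Fin n) (Fin n) ℝ}
    (hP : P ∈ rowStochastic ℝ (Fin n)) {γ : ℝ} (hγ : 0 ≤ γ) : specRad (γ • P) = γ := by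
  have hrow : ∀ i, ∑ j, (γ • P) i j = γ := fun i => by
    simp only [Matrix.smul_apply, smul_eq_mul, ← mul_sum, sum_row_of_mem_rowStochastic hP, mul_one]
  have habs : ∀ i, ∑ j, |(γ • P) i j| = γ := fun i =>
    (sum_congr rfl fun j _ => abs_of_nonneg (mul_nonneg hγ (nonneg_of_mem_rowStochastic hP))).trans
      (hrow i)
  refine (specRad_le_of_forall_sum_abs_le hγ fun i => (habs i).le).antisymm ?_
  have hmem : (γ : ℂ) ∈ spectrum ℂ ((γ • P).map (Complex.ofReal ·)) :=
    mem_spectrum_of_forall_sum_eq fun i => by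
      simp only [map_apply, ← Complex.ofReal_sum, hrow]
  simpa [abs_of_nonneg hγ] using norm_le_specRad hmem

end specRad

/-- For a row-stochastic `P`, `γ ∈ [0,1)`, `H = I - γP`,
`H̄ = diag(H)`: `ρ(I - H̄⁻¹H) ≤ ρ(I - H) < 1`. -/
theorem stmt_4 {n : ℕ} (hn : 1 ≤ n) (P : Matrix (Fin n) (Fin n) ℝ)
    (hP0 : ∀ i j, 0 ≤ P i j) (hP1 : ∀ i, ∑ j, P i j = 1)
    (γ : ℝ) (hγ0 : 0 ≤ γ) (hγ1 : γ < 1)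
    (H Hbar : Matrix (Fin n) (Fin n) ℝ)
    (hH : H = 1 - γ • P)
    (hB : Hbar = Matrix.diagonal (fun i => H i i)) :
    specRad (1 - Hbar⁻¹ * H) ≤ specRad (1 - H) ∧ specRad (1 - H) < 1 := by
  have : Nonempty (Fin n) := ⟨⟨0, hn⟩⟩
  have hP : P ∈ rowStochastic ℝ (Fin n) := mem_rowStochastic_iff_sum.2 ⟨hP0, hP1⟩
  have hρ : specRad (1 - H) = γ := by
    rw [hH, sub_sub_cancel, specRad_smul_of_mem_rowStochastic hP hγ0]
  rw [hρ, hB, hH]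
  exact ⟨specRad_le_of_forall_sum_abs_le hγ0
    (sum_abs_jacobiIterationMatrix_one_sub_smul_le hP hγ0 hγ1), hγ1⟩
end

section
/- Let P be an n×n row-stochastic real matrix (with n ≥ 1), let γ ∈ [0,1), and set H = I - γP and H̄ = diag(H). If H is symmetric, then κ(H̄⁻¹H) ≤ 2 κ(H), where κ denotes the ratio of the largest to the smallest eigenvalue. -/
open Matrix

/-- The largest real eigenvalue of a real square matrix (supremum of the real points
of the spectrum of its complexification). -/
noncomputable def maxEig {n : ℕ} (A : Matrix (Fin n) (Fin n) ℝ) : ℝ :=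
  sSup {x : ℝ | (x : ℂ) ∈ spectrum ℂ (A.map (Complex.ofReal ·))}

/-- The smallest real eigenvalue of a real square matrix (infimum of the real points
of the spectrum of its complexification). -/
noncomputable def minEig {n : ℕ} (A : Matrix (Fin n) (Fin n) ℝ) : ℝ :=
  sInf {x : ℝ | (x : ℂ) ∈ spectrum ℂ (A.map (Complex.ofReal ·))}

/-!
Write `H = I - Q` with `Q = γP`, which is symmetric, nonnegative, with row sums `γ`. The identity
`∑ᵢⱼ Qᵢⱼ (yᵢ + t yⱼ)² = (1 + t²) γ ‖y‖² + 2t yᵀQy` at `t = -1` and `t = 1` gives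
`(1 - γ) ‖y‖² ≤ yᵀHy ≤ 2 yᵀH̄y`. The spectrum of `H̄⁻¹H` is that of the symmetric matrix
`H̄^{-1/2} H H̄^{-1/2}`, so its extreme eigenvalues are the extreme values of `yᵀHy / yᵀH̄y`:
the largest is at most `2`, and since `H̄ᵢᵢ = eᵢᵀHeᵢ ≤ λ_max(H)`, the smallest is at least
`λ_min(H) / λ_max(H)`.
-/

namespace Matrix

section Spectrum

variable {ι : Type*} [Fintype ι] [DecidableEq ι]

theorem ofReal_mem_spectrum_map_iff (A : Matrix ι ι ℝ) (x : ℝ) :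
    (x : ℂ) ∈ spectrum ℂ (A.map (Complex.ofReal ·)) ↔ x ∈ spectrum ℝ A := by
  rw [mem_spectrum_iff_isRoot_charpoly, mem_spectrum_iff_isRoot_charpoly,
    show A.map (Complex.ofReal ·) = A.map Complex.ofRealHom from rfl, charpoly_map]
  exact Polynomial.isRoot_map_iff Complex.ofReal_injective

theorem spectrum_mul_comm {K : Type*} [Field K] (A B : Matrix ι ι K) :
    spectrum K (A * B) = spectrum K (B * A) := by
  ext r
  rw [mem_spectrum_iff_isRoot_charpoly, mem_spectrum_iff_isRoot_charpoly, charpoly_mul_comm]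

namespace IsHermitian

variable {A : Matrix ι ι ℝ}

theorem mem_lowerBounds_spectrum_iff (hA : A.IsHermitian) (c : ℝ) :
    c ∈ lowerBounds (spectrum ℝ A) ↔ ∀ x, c * (x ⬝ᵥ x) ≤ x ⬝ᵥ (A *ᵥ x) := by
  have hH : (A - algebraMap ℝ _ c).IsHermitian := hA.sub (isHermitian_diagonal _)
  calc c ∈ lowerBounds (spectrum ℝ A) ↔ spectrum ℝ (A - algebraMap ℝ _ c) ⊆ {a | 0 ≤ a} := by
        simp [← spectrum.sub_singleton_eq, mem_lowerBounds, Set.subset_def]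
    _ ↔ (A - algebraMap ℝ _ c).PosSemidef := by
        rw [posSemidef_iff_isHermitian_and_spectrum_nonneg, and_iff_right hH]
    _ ↔ ∀ x, 0 ≤ x ⬝ᵥ ((A - algebraMap ℝ _ c) *ᵥ x) := by
        rw [posSemidef_iff_dotProduct_mulVec, and_iff_right hH]
        simp only [star_trivial]
    _ ↔ _ := by simp [sub_mulVec, Algebra.algebraMap_eq_smul_one, smul_mulVec, dotProduct_smul]

theorem mem_upperBounds_spectrum_iff (hA : A.IsHermitian) (c : ℝ) :
    c ∈ upperBounds (spectrum ℝ A) ↔ ∀ x, x ⬝ᵥ (A *ᵥ x) ≤ c * (x ⬝ᵥ x) := by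
  have hH : (algebraMap ℝ _ c - A).IsHermitian := (isHermitian_diagonal _).sub hA
  calc c ∈ upperBounds (spectrum ℝ A) ↔ spectrum ℝ (algebraMap ℝ _ c - A) ⊆ {a | 0 ≤ a} := by
        simp [← spectrum.singleton_sub_eq, mem_upperBounds, Set.subset_def]
    _ ↔ (algebraMap ℝ _ c - A).PosSemidef := by
        rw [posSemidef_iff_isHermitian_and_spectrum_nonneg, and_iff_right hH]
    _ ↔ ∀ x, 0 ≤ x ⬝ᵥ ((algebraMap ℝ _ c - A) *ᵥ x) := by
        rw [posSemidef_iff_dotProduct_mulVec, and_iff_right hH]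
        simp only [star_trivial]
    _ ↔ _ := by simp [sub_mulVec, Algebra.algebraMap_eq_smul_one, smul_mulVec, dotProduct_smul]

theorem diagonal_mul_mul (hA : A.IsHermitian) (r : ι → ℝ) :
    (diagonal r * A * diagonal r).IsHermitian := by
  simpa using isHermitian_conjTranspose_mul_mul (diagonal r) hA

end IsHermitian

end Spectrum

section DiagonalScaling

variable {ι : Type*} {d r : ι → ℝ}

theorem exists_mul_self_mul_eq_one (hd : ∀ i, 0 < d i) :
    ∃ r : ι → ℝ, ∀ i, r i * r i * d i = 1 :=
  ⟨fun i => (√(d i))⁻¹, fun i => by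
    rw [← mul_inv, Real.mul_self_sqrt (hd i).le, inv_mul_cancel₀ (hd i).ne']⟩

variable [Fintype ι] [DecidableEq ι]

theorem spectrum_inv_diagonal_mul (hr : ∀ i, r i * r i * d i = 1) (A : Matrix ι ι ℝ) :
    spectrum ℝ ((diagonal d)⁻¹ * A) = spectrum ℝ (diagonal r * A * diagonal r) := by
  have hinv : (diagonal d)⁻¹ = diagonal r * diagonal r := by
    refine inv_eq_left_inv ?_
    rw [diagonal_mul_diagonal, diagonal_mul_diagonal, ← diagonal_one]
    exact congrArg diagonal (funext hr)
  rw [hinv, mul_assoc, spectrum_mul_comm]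

theorem dotProduct_mulVec_diagonal_mul_mul (A : Matrix ι ι ℝ) (r x : ι → ℝ) :
    x ⬝ᵥ ((diagonal r * A * diagonal r) *ᵥ x) =
      (diagonal r *ᵥ x) ⬝ᵥ (A *ᵥ (diagonal r *ᵥ x)) := by
  rw [← mulVec_mulVec, ← mulVec_mulVec, dotProduct_mulVec, ← mulVec_transpose, diagonal_transpose]

theorem dotProduct_self_eq_diagonal (hr : ∀ i, r i * r i * d i = 1) (x : ι → ℝ) :
    x ⬝ᵥ x = (diagonal r *ᵥ x) ⬝ᵥ (diagonal d *ᵥ (diagonal r *ᵥ x)) := by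
  simp only [dotProduct, mulVec_diagonal]
  exact Finset.sum_congr rfl fun i _ => by linear_combination (-(x i * x i)) * hr i

theorem mulVec_diagonal_surjective (hr : ∀ i, r i ≠ 0) :
    Function.Surjective (diagonal r).mulVec := fun y =>
  ⟨fun i => y i / r i, funext fun i => by simp [mulVec_diagonal, mul_div_cancel₀ _ (hr i)]⟩

theorem forall_dotProduct_diagonal_mul_mul_iff (hr : ∀ i, r i * r i * d i = 1)
    (A : Matrix ι ι ℝ) (p : ℝ → ℝ → Prop) :
    (∀ x, p (x ⬝ᵥ ((diagonal r * A * diagonal r) *ᵥ x)) (x ⬝ᵥ x)) ↔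
      ∀ y, p (y ⬝ᵥ (A *ᵥ y)) (y ⬝ᵥ (diagonal d *ᵥ y)) := by
  have hr0 : ∀ i, r i ≠ 0 := fun i h => by simpa [h] using hr i
  simp only [dotProduct_mulVec_diagonal_mul_mul, dotProduct_self_eq_diagonal hr]
  exact Iff.symm <| (mulVec_diagonal_surjective hr0).forall

end DiagonalScaling

section NonnegSymm

variable {ι : Type*} [Fintype ι] {Q : Matrix ι ι ℝ}

theorem IsSymm.sum_mul_add_mul_sq (hQ : Q.IsSymm) (y : ι → ℝ) (t : ℝ) :
    ∑ i, ∑ j, Q i j * (y i + t * y j) ^ 2 =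
      (1 + t ^ 2) * ∑ i, (∑ j, Q i j) * y i ^ 2 + 2 * t * (y ⬝ᵥ (Q *ᵥ y)) := by
  have hswap : ∑ i, ∑ j, Q i j * y j ^ 2 = ∑ i, (∑ j, Q i j) * y i ^ 2 := by
    rw [Finset.sum_comm]
    simp only [Finset.sum_mul, hQ.apply]
  have hquad : y ⬝ᵥ (Q *ᵥ y) = ∑ i, ∑ j, Q i j * (y i * y j) := by
    simp only [dotProduct, mulVec, Finset.mul_sum]
    exact Finset.sum_congr rfl fun i _ => Finset.sum_congr rfl fun j _ => by ring
  calc ∑ i, ∑ j, Q i j * (y i + t * y j) ^ 2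
      = ∑ i, ∑ j, (Q i j * y i ^ 2 + 2 * t * (Q i j * (y i * y j)) + t ^ 2 * (Q i j * y j ^ 2)) :=
        Finset.sum_congr rfl fun i _ => Finset.sum_congr rfl fun j _ => by ring
    _ = _ := by
        simp only [Finset.sum_add_distrib, ← Finset.mul_sum, ← Finset.sum_mul, hswap, hquad]
        ring

theorem IsSymm.dotProduct_mulVec_le (hQ : Q.IsSymm) (hQ0 : ∀ i j, 0 ≤ Q i j) (y : ι → ℝ) :
    y ⬝ᵥ (Q *ᵥ y) ≤ ∑ i, (∑ j, Q i j) * y i ^ 2 := by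
  have hsum := hQ.sum_mul_add_mul_sq y (-1)
  have hnonneg : 0 ≤ ∑ i, ∑ j, Q i j * (y i + -1 * y j) ^ 2 :=
    Finset.sum_nonneg fun i _ => Finset.sum_nonneg fun j _ => mul_nonneg (hQ0 i j) (sq_nonneg _)
  linarith

theorem IsSymm.le_dotProduct_mulVec (hQ : Q.IsSymm) (hQ0 : ∀ i j, 0 ≤ Q i j) (y : ι → ℝ) :
    2 * ∑ i, Q i i * y i ^ 2 - ∑ i, (∑ j, Q i j) * y i ^ 2 ≤ y ⬝ᵥ (Q *ᵥ y) := by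
  have hsum := hQ.sum_mul_add_mul_sq y 1
  have hdiag : ∑ i, Q i i * (y i + 1 * y i) ^ 2 ≤ ∑ i, ∑ j, Q i j * (y i + 1 * y j) ^ 2 :=
    Finset.sum_le_sum fun i _ => Finset.single_le_sum (f := fun j => Q i j * (y i + 1 * y j) ^ 2)
      (fun j _ => mul_nonneg (hQ0 i j) (sq_nonneg _)) (Finset.mem_univ i)
  have hfour : ∑ i, Q i i * (y i + 1 * y i) ^ 2 = 4 * ∑ i, Q i i * y i ^ 2 := by
    rw [Finset.mul_sum]
    exact Finset.sum_congr rfl fun i _ => by ring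
  linarith

end NonnegSymm

end Matrix

section Eig

variable {n : ℕ}

theorem maxEig_eq_sSup_spectrum (A : Matrix (Fin n) (Fin n) ℝ) :
    maxEig A = sSup (spectrum ℝ A) := by
  simp only [maxEig, Matrix.ofReal_mem_spectrum_map_iff]
  rfl

theorem minEig_eq_sInf_spectrum (A : Matrix (Fin n) (Fin n) ℝ) :
    minEig A = sInf (spectrum ℝ A) := by
  simp only [minEig, Matrix.ofReal_mem_spectrum_map_iff]
  rfl

variable [NeZero n] {A : Matrix (Fin n) (Fin n) ℝ}

theorem maxEig_le_iff (hA : A.IsHermitian) {c : ℝ} :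
    maxEig A ≤ c ↔ ∀ x, x ⬝ᵥ (A *ᵥ x) ≤ c * (x ⬝ᵥ x) := by
  rw [maxEig_eq_sSup_spectrum, csSup_le_iff (finite_spectrum A).bddAbove
    ⟨_, hA.eigenvalues_mem_spectrum_real 0⟩, ← mem_upperBounds, hA.mem_upperBounds_spectrum_iff]

theorem le_minEig_iff (hA : A.IsHermitian) {c : ℝ} :
    c ≤ minEig A ↔ ∀ x, c * (x ⬝ᵥ x) ≤ x ⬝ᵥ (A *ᵥ x) := by
  rw [minEig_eq_sInf_spectrum, le_csInf_iff (finite_spectrum A).bddBelow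
    ⟨_, hA.eigenvalues_mem_spectrum_real 0⟩, ← mem_lowerBounds, hA.mem_lowerBounds_spectrum_iff]

theorem diag_le_maxEig (hA : A.IsHermitian) (i : Fin n) : A i i ≤ maxEig A := by
  simpa using (maxEig_le_iff hA).1 le_rfl (Pi.single i 1)

theorem minEig_le_diag (hA : A.IsHermitian) (i : Fin n) : minEig A ≤ A i i := by
  simpa using (le_minEig_iff hA).1 le_rfl (Pi.single i 1)

end Eig

section GeneralizedRayleigh

variable {n : ℕ} [NeZero n] {A : Matrix (Fin n) (Fin n) ℝ} {d : Fin n → ℝ}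

theorem maxEig_inv_diagonal_mul_le_iff (hA : A.IsHermitian) (hd : ∀ i, 0 < d i) {c : ℝ} :
    maxEig ((diagonal d)⁻¹ * A) ≤ c ↔ ∀ y, y ⬝ᵥ (A *ᵥ y) ≤ c * (y ⬝ᵥ (diagonal d *ᵥ y)) := by
  obtain ⟨r, hr⟩ := exists_mul_self_mul_eq_one hd
  rw [maxEig_eq_sSup_spectrum, spectrum_inv_diagonal_mul hr, ← maxEig_eq_sSup_spectrum,
    maxEig_le_iff (hA.diagonal_mul_mul r)]
  exact forall_dotProduct_diagonal_mul_mul_iff hr A (fun q s => q ≤ c * s)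

theorem le_minEig_inv_diagonal_mul_iff (hA : A.IsHermitian) (hd : ∀ i, 0 < d i) {c : ℝ} :
    c ≤ minEig ((diagonal d)⁻¹ * A) ↔ ∀ y, c * (y ⬝ᵥ (diagonal d *ᵥ y)) ≤ y ⬝ᵥ (A *ᵥ y) := by
  obtain ⟨r, hr⟩ := exists_mul_self_mul_eq_one hd
  rw [minEig_eq_sInf_spectrum, spectrum_inv_diagonal_mul hr, ← minEig_eq_sInf_spectrum,
    le_minEig_iff (hA.diagonal_mul_mul r)]
  exact forall_dotProduct_diagonal_mul_mul_iff hr A (fun q s => c * s ≤ q)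

theorem minEig_div_maxEig_le_minEig_inv_diagonal_mul (hA : A.IsHermitian) (hA0 : 0 < minEig A) :
    minEig A / maxEig A ≤ minEig ((diagonal fun i => A i i)⁻¹ * A) := by
  have hd : ∀ i, 0 < A i i := fun i => hA0.trans_le (minEig_le_diag hA i)
  have hM : 0 < maxEig A := (hd 0).trans_le (diag_le_maxEig hA 0)
  rw [le_minEig_inv_diagonal_mul_iff hA hd]
  intro y
  have hdiag : y ⬝ᵥ (diagonal (fun i => A i i) *ᵥ y) ≤ maxEig A * (y ⬝ᵥ y) := by
    simp only [dotProduct, mulVec_diagonal, Finset.mul_sum]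
    exact Finset.sum_le_sum fun i _ => by nlinarith [diag_le_maxEig hA i, mul_self_nonneg (y i)]
  calc minEig A / maxEig A * (y ⬝ᵥ (diagonal (fun i => A i i) *ᵥ y))
      ≤ minEig A / maxEig A * (maxEig A * (y ⬝ᵥ y)) := by gcongr
    _ = minEig A * (y ⬝ᵥ y) := by field_simp
    _ ≤ y ⬝ᵥ (A *ᵥ y) := (le_minEig_iff hA).1 le_rfl y

theorem maxEig_div_minEig_inv_diagonal_mul_le (hA : A.IsHermitian) (hA0 : 0 < minEig A) {c : ℝ}
    (hc0 : 0 ≤ c) (hc : maxEig ((diagonal fun i => A i i)⁻¹ * A) ≤ c) :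
    maxEig ((diagonal fun i => A i i)⁻¹ * A) / minEig ((diagonal fun i => A i i)⁻¹ * A) ≤
      c * (maxEig A / minEig A) := by
  have hM : 0 < maxEig A := hA0.trans_le ((minEig_le_diag hA 0).trans (diag_le_maxEig hA 0))
  calc _ ≤ c / (minEig A / maxEig A) :=
        div_le_div₀ hc0 hc (div_pos hA0 hM) (minEig_div_maxEig_le_minEig_inv_diagonal_mul hA hA0)
    _ = c * (maxEig A / minEig A) := by rw [div_div_eq_mul_div, mul_div_assoc]

end GeneralizedRayleigh

section Stochastic

variable {n : ℕ} [NeZero n] {Q : Matrix (Fin n) (Fin n) ℝ} {γ : ℝ}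

theorem one_sub_le_minEig_one_sub (hQ : Q.IsSymm) (hQ0 : ∀ i j, 0 ≤ Q i j)
    (hrow : ∀ i, ∑ j, Q i j = γ) : 1 - γ ≤ minEig (1 - Q) := by
  rw [le_minEig_iff (isHermitian_iff_isSymm.2 (isSymm_one.sub hQ))]
  intro y
  have hQy := hQ.dotProduct_mulVec_le hQ0 y
  simp only [hrow, ← Finset.mul_sum] at hQy
  have hyy : y ⬝ᵥ y = ∑ i, y i ^ 2 := by simp [dotProduct, sq]
  rw [sub_mulVec, one_mulVec, dotProduct_sub, hyy]
  linarith

theorem maxEig_inv_diagonal_mul_one_sub_le_two (hQ : Q.IsSymm) (hQ0 : ∀ i j, 0 ≤ Q i j)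
    (hrow : ∀ i, ∑ j, Q i j = γ) (hγ : γ < 1) :
    maxEig ((diagonal fun i => (1 - Q) i i)⁻¹ * (1 - Q)) ≤ 2 := by
  have hd : ∀ i, 0 < (1 - Q) i i := fun i => by
    have hQii : Q i i ≤ γ := hrow i ▸ Finset.single_le_sum (fun j _ => hQ0 i j) (Finset.mem_univ i)
    simp only [Matrix.sub_apply, one_apply_eq]
    linarith
  rw [maxEig_inv_diagonal_mul_le_iff (isHermitian_iff_isSymm.2 (isSymm_one.sub hQ)) hd]
  intro y
  have hQy := hQ.le_dotProduct_mulVec hQ0 y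
  simp only [hrow, ← Finset.mul_sum] at hQy
  have hyy : y ⬝ᵥ y = ∑ i, y i ^ 2 := by simp [dotProduct, sq]
  have hyDy : y ⬝ᵥ (diagonal (fun i => (1 - Q) i i) *ᵥ y) =
      ∑ i, y i ^ 2 - ∑ i, Q i i * y i ^ 2 := by
    simp only [dotProduct, mulVec_diagonal, Matrix.sub_apply, one_apply_eq,
      ← Finset.sum_sub_distrib]
    exact Finset.sum_congr rfl fun i _ => by ring
  have hγy : γ * ∑ i, y i ^ 2 ≤ ∑ i, y i ^ 2 :=
    mul_le_of_le_one_left (Finset.sum_nonneg fun i _ => sq_nonneg (y i)) hγ.le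
  rw [sub_mulVec, one_mulVec, dotProduct_sub, hyy, hyDy]
  linarith

end Stochastic

/-- For a row-stochastic `P`, `γ ∈ [0,1)`, `H = I - γP`,
`H̄ = diag(H)`: if `H` is symmetric, then `κ(H̄⁻¹H) ≤ 2 κ(H)` where `κ` is the ratio
of the largest to the smallest eigenvalue. -/
theorem stmt_11 {n : ℕ} (hn : 1 ≤ n) (P : Matrix (Fin n) (Fin n) ℝ)
    (hP0 : ∀ i j, 0 ≤ P i j) (hP1 : ∀ i, ∑ j, P i j = 1)
    (γ : ℝ) (hγ0 : 0 ≤ γ) (hγ1 : γ < 1)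
    (H Hbar : Matrix (Fin n) (Fin n) ℝ)
    (hH : H = 1 - γ • P)
    (hB : Hbar = Matrix.diagonal (fun i => H i i))
    (hsymm : H.IsSymm) :
    maxEig (Hbar⁻¹ * H) / minEig (Hbar⁻¹ * H) ≤ 2 * (maxEig H / minEig H) := by
  have : NeZero n := ⟨by omega⟩
  subst hH hB
  have hQ : (γ • P).IsSymm := by simpa using isSymm_one.sub hsymm
  have hQ0 : ∀ i j, 0 ≤ (γ • P) i j := fun i j => mul_nonneg hγ0 (hP0 i j)
  have hrow : ∀ i, ∑ j, (γ • P) i j = γ := fun i => by simp [← Finset.mul_sum, hP1]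
  have hmin : 0 < minEig (1 - γ • P) :=
    (sub_pos.2 hγ1).trans_le (one_sub_le_minEig_one_sub hQ hQ0 hrow)
  exact maxEig_div_minEig_inv_diagonal_mul_le (isHermitian_iff_isSymm.2 hsymm) hmin zero_le_two
    (maxEig_inv_diagonal_mul_one_sub_le_two hQ hQ0 hrow hγ1)
end
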